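/- Let d>0 and b>0. The set Γ = {(r,z) ∈ ℝ² : −1 + 2br/(d+1) + z² = 0} is invariant for the planar system dr/dt = −2 d r z, dz/dt = −1 + 2 b r + z²; moreover every point of Γ with |z|<1 lies on the heteroclinic orbit t ↦ (R₀(t), Z₀(t)) with R₀(t) = ((d+1)/(2b))·cosh⁻²(d t), Z₀(t) = tanh(d t), which connects the equilibria (0,1) and (0,−1): lim_{t→±∞}(R₀(t),Z₀(t)) = (0,±1). -/

import Mathlib

/-!
Along a solution, the defect `F = -1 + 2br/(d+1) + z²` of the conic `Γ` satisfies the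
linear equation `F' = 2zF`, so `F(t) = F(0) · exp (∫₀ᵗ 2z)` and `Γ` is invariant.
On `Γ` one has `r = (d+1)/(2b) · (1 - z²)`, and `1 - tanh² = cosh⁻²`, so `Γ ∩ {|z| < 1}` is
parametrised by `z = tanh (d t)`, i.e. by `t = artanh z / d`; the limits follow from
`tanh → ±1` at `±∞`.
-/

open Filter Topology Real

theorem Real.inv_cosh_sq (x : ℝ) : (cosh x)⁻¹ ^ 2 = 1 - tanh x ^ 2 := by
  have := cosh_sq_sub_sinh_sq x
  rw [tanh_eq_sinh_div_cosh]
  field_simp [(cosh_pos x).ne']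
  linarith

theorem Real.tanh_eq_one_sub (x : ℝ) : tanh x = 1 - 2 / (exp (2 * x) + 1) := by
  have hx : exp (2 * x) = exp x * exp x := by rw [← exp_add, two_mul]
  rw [tanh_eq, exp_neg, hx]
  field_simp
  ring

theorem Real.tendsto_tanh_atTop : Tendsto tanh atTop (𝓝 1) := by
  have hden : Tendsto (fun x => exp (2 * x) + 1) atTop atTop :=
    tendsto_atTop_add_const_right _ _
      (tendsto_exp_atTop.comp (tendsto_id.const_mul_atTop two_pos))
  have := (tendsto_const_nhds (x := (2 : ℝ)).div_atTop hden).const_sub (1 : ℝ)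
  simpa [← tanh_eq_one_sub] using this

theorem Real.tendsto_tanh_atBot : Tendsto tanh atBot (𝓝 (-1)) := by
  simpa [Function.comp_def] using (tendsto_tanh_atTop.comp tendsto_neg_atBot_atTop).neg

theorem eq_mul_exp_integral_of_hasDerivAt {f g : ℝ → ℝ} (hg : Continuous g)
    (hf : ∀ t, HasDerivAt f (g t * f t) t) (t₀ t : ℝ) :
    f t = f t₀ * exp (∫ s in t₀..t, g s) := by
  set W : ℝ → ℝ := fun t => ∫ s in t₀..t, g s
  have hW : ∀ t, HasDerivAt W (g t) t := fun t =>
    (hg.integral_hasStrictDerivAt t₀ t).hasDerivAt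
  have hconst : ∀ t, HasDerivAt (fun t => f t * exp (-W t)) 0 t := fun t => by
    refine ((hf t).mul (hW t).neg.exp).congr_deriv ?_
    simp only [Pi.neg_apply]
    ring
  have key := is_const_of_deriv_eq_zero (fun t => (hconst t).differentiableAt)
    (fun t => (hconst t).deriv) t t₀
  simp only [W, intervalIntegral.integral_same, neg_zero, exp_zero, mul_one] at key
  rw [← key, mul_assoc, ← exp_add, neg_add_cancel, exp_zero, mul_one]

theorem hasDerivAt_conic_defect {d b t : ℝ} (hd : d + 1 ≠ 0) {r z : ℝ → ℝ}
    (hr : HasDerivAt r (-2 * d * r t * z t) t)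
    (hz : HasDerivAt z (-1 + 2 * b * r t + z t ^ 2) t) :
    HasDerivAt (fun t => -1 + 2 * b * r t / (d + 1) + z t ^ 2)
      (2 * z t * (-1 + 2 * b * r t / (d + 1) + z t ^ 2)) t := by
  refine ((((hr.const_mul (2 * b)).div_const (d + 1)).const_add (-1)).add
    (hz.pow 2)).congr_deriv ?_
  field_simp
  ring

theorem conic_defect_eq_zero {d b : ℝ} (hd : d + 1 ≠ 0) {r z : ℝ → ℝ}
    (hr : ∀ t, HasDerivAt r (-2 * d * r t * z t) t)
    (hz : ∀ t, HasDerivAt z (-1 + 2 * b * r t + z t ^ 2) t)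
    (h0 : -1 + 2 * b * r 0 / (d + 1) + z 0 ^ 2 = 0) (t : ℝ) :
    -1 + 2 * b * r t / (d + 1) + z t ^ 2 = 0 := by
  have hzc : Continuous z := continuous_iff_continuousAt.2 fun t => (hz t).continuousAt
  rw [eq_mul_exp_integral_of_hasDerivAt (continuous_const.mul hzc)
    (fun t => hasDerivAt_conic_defect hd (hr t) (hz t)) 0 t, h0, zero_mul]

theorem exists_eq_orbit {d b r z : ℝ} (hd : d ≠ 0) (hd1 : d + 1 ≠ 0) (hb : b ≠ 0)
    (h : -1 + 2 * b * r / (d + 1) + z ^ 2 = 0) (hz : |z| < 1) :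
    ∃ t, r = (d + 1) / (2 * b) * (cosh (d * t))⁻¹ ^ 2 ∧ z = tanh (d * t) := by
  have htanh : tanh (artanh z) = z := tanh_artanh (abs_lt.mp hz)
  refine ⟨artanh z / d, ?_, ?_⟩ <;> rw [mul_div_cancel₀ _ hd]
  · rw [inv_cosh_sq, htanh]
    field_simp at h ⊢
    linear_combination h
  · exact htanh.symm

theorem tendsto_orbit {l : Filter ℝ} {c d L : ℝ} (hL : L ^ 2 = 1)
    (h : Tendsto (fun t => tanh (d * t)) l (𝓝 L)) :
    Tendsto (fun t => (c * (cosh (d * t))⁻¹ ^ 2, tanh (d * t))) l (𝓝 (0, L)) := by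
  have hR : Tendsto (fun t => c * (1 - tanh (d * t) ^ 2)) l (𝓝 (c * (1 - L ^ 2))) :=
    tendsto_const_nhds.mul (tendsto_const_nhds.sub (h.pow 2))
  rw [hL, sub_self, mul_zero] at hR
  simp_rw [inv_cosh_sq]
  exact hR.prodMk_nhds h

/-- The set `Γ = {(r,z) : -1 + 2br/(d+1) + z² = 0}` is invariant for the planar system
`dr/dt = -2 d r z`, `dz/dt = -1 + 2br + z²`; every point of `Γ` with `|z| < 1` lies on the
heteroclinic orbit `t ↦ (R₀ t, Z₀ t)`, which connects the equilibria `(0,1)` and `(0,-1)`. -/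
theorem heteroclinic_manifold_invariant
    (d b : ℝ) (hd : 0 < d) (hb : 0 < b)
    (Γ : Set (ℝ × ℝ)) (hΓ : Γ = {p : ℝ × ℝ | -1 + 2 * b * p.1 / (d + 1) + p.2 ^ 2 = 0})
    (R₀ : ℝ → ℝ) (hR₀ : R₀ = fun t => ((d + 1) / (2 * b)) * (Real.cosh (d * t))⁻¹ ^ 2)
    (Z₀ : ℝ → ℝ) (hZ₀ : Z₀ = fun t => Real.tanh (d * t)) :
    (∀ r z : ℝ → ℝ,
      (∀ t, HasDerivAt r (-2 * d * r t * z t) t) →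
      (∀ t, HasDerivAt z (-1 + 2 * b * r t + (z t) ^ 2) t) →
      (r 0, z 0) ∈ Γ → ∀ t, (r t, z t) ∈ Γ) ∧
    (∀ p : ℝ × ℝ, p ∈ Γ → |p.2| < 1 → ∃ t : ℝ, p.1 = R₀ t ∧ p.2 = Z₀ t) ∧
    Tendsto (fun t => (R₀ t, Z₀ t)) atTop (nhds ((0 : ℝ), (1 : ℝ))) ∧
    Tendsto (fun t => (R₀ t, Z₀ t)) atBot (nhds ((0 : ℝ), (-1 : ℝ))) := by
  have hd1 : d + 1 ≠ 0 := by positivity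
  subst hΓ hR₀ hZ₀
  refine ⟨fun r z hr hz h0 => conic_defect_eq_zero hd1 hr hz h0,
    fun p hp hp2 => exists_eq_orbit hd.ne' hd1 hb.ne' hp hp2, ?_, ?_⟩
  · exact tendsto_orbit (by norm_num) (tendsto_tanh_atTop.comp (tendsto_id.const_mul_atTop hd))
  · exact tendsto_orbit (by norm_num) (tendsto_tanh_atBot.comp (tendsto_id.const_mul_atBot hd))
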